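/- (Bessel inequality for the weighted Haar system.) Let w be a weight with 0 < m_I w < ∞ for every dyadic interval I. For every g ∈ L₂, Σ_{I∈D} (1/(|I| m_I w)) · ⟨g, w^{1/2} H_I^w⟩²_{L₂} ≤ ‖g‖²_{L₂}, where H_I^w := h_I √|I| − A_I^w χ_I and A_I^w := (m_{I⁺}w − m_{I⁻}w)/(2 m_I w). -/

import Mathlib

open MeasureTheory Set

noncomputable section

/-- The dyadic interval `[k 2^{-j}, (k+1) 2^{-j})`, indexed by `I = (j, k)`. -/
def dyadicI (I : ℤ × ℤ) : Set ℝ :=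
  Set.Ico ((I.2 : ℝ) * 2 ^ (-I.1)) (((I.2 : ℝ) + 1) * 2 ^ (-I.1))

/-- The length `|I| = 2^{-j}` of the dyadic interval indexed by `I = (j, k)`. -/
def len (I : ℤ × ℤ) : ℝ := 2 ^ (-I.1)

/-- The left half `I⁺` of the dyadic interval `I`. -/
def leftHalf (I : ℤ × ℤ) : ℤ × ℤ := (I.1 + 1, 2 * I.2)

/-- The right half `I⁻` of the dyadic interval `I`. -/
def rightHalf (I : ℤ × ℤ) : ℤ × ℤ := (I.1 + 1, 2 * I.2 + 1)

/-- The average `m_I f = (1/|I|) ∫_I f`. -/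
def avg (f : ℝ → ℝ) (I : ℤ × ℤ) : ℝ := (len I)⁻¹ * ∫ x in dyadicI I, f x

/-- The Haar function `h_I = |I|^{-1/2} (χ_{I⁺} - χ_{I⁻})`. -/
def haar (I : ℤ × ℤ) (x : ℝ) : ℝ :=
  (Real.sqrt (len I))⁻¹ *
    ((dyadicI (leftHalf I)).indicator (fun _ => (1 : ℝ)) x -
      (dyadicI (rightHalf I)).indicator (fun _ => (1 : ℝ)) x)

/-- The Haar coefficient `b_I = ⟨b, h_I⟩`. -/
def haarCoef (b : ℝ → ℝ) (I : ℤ × ℤ) : ℝ := ∫ x, b x * haar I x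

/-- The dyadic BMO norm of `b`. -/
def bmoNorm (b : ℝ → ℝ) : ℝ :=
  Real.sqrt (⨆ I : ℤ × ℤ, (len I)⁻¹ * ∫ x in dyadicI I, (b x - avg b I) ^ 2)

/-- The `A₂^d` characteristic `‖w‖_{A₂^d} = sup_I (m_I w)(m_I w⁻¹)`. -/
def A2const (w : ℝ → ℝ) : ℝ :=
  ⨆ I : ℤ × ℤ, avg w I * avg (fun x => (w x)⁻¹) I

/-- `A_I^w = (m_{I⁺}w − m_{I⁻}w)/(2 m_I w)`. -/
def AIw (w : ℝ → ℝ) (I : ℤ × ℤ) : ℝ :=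
  (avg w (leftHalf I) - avg w (rightHalf I)) / (2 * avg w I)

/-- The weighted Haar function `H_I^w = h_I √|I| − A_I^w χ_I`. -/
def weightedHaar (w : ℝ → ℝ) (I : ℤ × ℤ) (x : ℝ) : ℝ :=
  haar I x * Real.sqrt (len I) - AIw w I * (dyadicI I).indicator (fun _ => (1 : ℝ)) x


/-! The functions `e_I = w^{1/2} H_I^w` are pairwise orthogonal in `L²` with
`‖e_I‖² ≤ |I| m_I w`, and for such a family Bessel's inequality follows from expanding
`0 ≤ ‖g - Σ_I ⟨g, e_I⟩ e_I / (|I| m_I w)‖²`.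

The constant `A_I^w` is chosen so that `∫ w H_I^w = 0`, which also gives
`∫ w (H_I^w)² = (1 - (A_I^w)²) ∫_I w`. If `J` is strictly finer than `I`, then `J` lies in a
half of `I` or outside `I`, so `H_I^w` is constant on `J` and `∫ w H_I^w H_J^w` is a multiple of
`∫ w H_J^w = 0`; distinct intervals of the same length are disjoint. Nestedness of dyadic
intervals comes from `x ∈ [k 2^{-j}, (k+1) 2^{-j}) ↔ ⌊2^j x⌋ = k` and
`⌊2^i x⌋ = ⌊2^j x⌋ / 2^{j-i}` for `i ≤ j`. -/

open scoped RealInnerProductSpace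

theorem sum_inv_mul_inner_sq_le_norm_sq {E ι : Type*} [NormedAddCommGroup E]
    [InnerProductSpace ℝ E] {e : ι → E} {n : ι → ℝ} (hn : ∀ i, 0 < n i)
    (horth : Pairwise fun i j => ⟪e i, e j⟫ = 0) (hnorm : ∀ i, ‖e i‖ ^ 2 ≤ n i)
    (g : E) (s : Finset ι) :
    ∑ i ∈ s, (n i)⁻¹ * ⟪g, e i⟫ ^ 2 ≤ ‖g‖ ^ 2 := by
  set a : ι → ℝ := fun i => ⟪g, e i⟫ / n i
  set T := ∑ i ∈ s, (n i)⁻¹ * ⟪g, e i⟫ ^ 2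
  have hT : ∑ i ∈ s, a i * ⟪g, e i⟫ = T :=
    Finset.sum_congr rfl fun i _ => by simp only [a]; ring
  have hinner : ⟪g, ∑ i ∈ s, a i • e i⟫ = T := by
    simp only [inner_sum, real_inner_smul_right, ← hT, mul_comm]
  have hnorm_sum : ‖∑ i ∈ s, a i • e i‖ ^ 2 ≤ T := by
    calc ‖∑ i ∈ s, a i • e i‖ ^ 2 = ∑ i ∈ s, a i ^ 2 * ‖e i‖ ^ 2 := by
          rw [← real_inner_self_eq_norm_sq, sum_inner]
          refine Finset.sum_congr rfl fun i hi => ?_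
          rw [inner_sum, Finset.sum_eq_single i (fun j _ hji => by
            rw [real_inner_smul_left, real_inner_smul_right, horth hji.symm]; ring)
            (fun h => absurd hi h), real_inner_smul_left, real_inner_smul_right,
            real_inner_self_eq_norm_sq]
          ring
      _ ≤ ∑ i ∈ s, a i ^ 2 * n i :=
          Finset.sum_le_sum fun i _ => mul_le_mul_of_nonneg_left (hnorm i) (sq_nonneg _)
      _ = T := by
          rw [← hT]
          refine Finset.sum_congr rfl fun i _ => ?_
          simp only [a]
          field_simp [(hn i).ne']
  linarith [norm_sub_sq_real g (∑ i ∈ s, a i • e i), sq_nonneg ‖g - ∑ i ∈ s, a i • e i‖]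

theorem MeasureTheory.MemLp.inner_toLp_eq_integral_mul {α : Type*} [MeasurableSpace α]
    {μ : Measure α} {f g : α → ℝ} (hf : MemLp f 2 μ) (hg : MemLp g 2 μ) :
    ⟪hf.toLp f, hg.toLp g⟫ = ∫ x, f x * g x ∂μ := by
  rw [L2.inner_def]
  refine integral_congr_ae ?_
  filter_upwards [hf.coeFn_toLp, hg.coeFn_toLp] with x hfx hgx
  rw [hfx, hgx, real_inner_eq_re_inner, mul_comm]
  simp

theorem MeasureTheory.MemLp.norm_toLp_sq {α : Type*} [MeasurableSpace α]
    {μ : Measure α} {f : α → ℝ} (hf : MemLp f 2 μ) :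
    ‖hf.toLp f‖ ^ 2 = ∫ x, f x ^ 2 ∂μ := by
  rw [← real_inner_self_eq_norm_sq, hf.inner_toLp_eq_integral_mul]
  simp only [sq]

theorem len_pos (I : ℤ × ℤ) : 0 < len I := zpow_pos two_pos _

theorem len_leftHalf (I : ℤ × ℤ) : len (leftHalf I) = len I / 2 := by
  simp only [len, leftHalf, neg_add, zpow_add₀ (two_ne_zero : (2 : ℝ) ≠ 0), zpow_neg_one,
    div_eq_mul_inv]

theorem len_rightHalf (I : ℤ × ℤ) : len (rightHalf I) = len I / 2 := len_leftHalf I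

theorem mem_dyadicI_iff {I : ℤ × ℤ} {x : ℝ} : x ∈ dyadicI I ↔ ⌊x * 2 ^ I.1⌋ = I.2 := by
  have h : (0 : ℝ) < 2 ^ I.1 := zpow_pos two_pos _
  rw [Int.floor_eq_iff, dyadicI, mem_Ico, zpow_neg, ← div_eq_mul_inv, ← div_eq_mul_inv,
    div_le_iff₀ h, lt_div_iff₀ h]

theorem floor_mul_two_zpow_of_le {i j : ℤ} (hij : i ≤ j) (x : ℝ) :
    ⌊x * 2 ^ i⌋ = ⌊x * 2 ^ j⌋ / 2 ^ (j - i).toNat := by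
  have h : x * 2 ^ i = x * 2 ^ j / ((2 ^ (j - i).toNat : ℕ) : ℝ) := by
    rw [Nat.cast_pow, Nat.cast_ofNat, ← zpow_natCast, Int.toNat_of_nonneg (sub_nonneg.2 hij),
      mul_div_assoc, ← zpow_sub₀ two_ne_zero, sub_sub_cancel]
  rw [h, Int.floor_div_natCast]
  norm_cast

theorem mem_dyadicI_iff_of_le {K J : ℤ × ℤ} (hKJ : K.1 ≤ J.1) {x y : ℝ} (hx : x ∈ dyadicI J)
    (hy : y ∈ dyadicI J) : x ∈ dyadicI K ↔ y ∈ dyadicI K := by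
  simp only [mem_dyadicI_iff] at hx hy ⊢
  rw [floor_mul_two_zpow_of_le hKJ x, floor_mul_two_zpow_of_le hKJ y, hx, hy]

theorem disjoint_dyadicI_of_fst_eq {I J : ℤ × ℤ} (h : I.1 = J.1) (hne : I ≠ J) :
    Disjoint (dyadicI I) (dyadicI J) := by
  refine Set.disjoint_left.2 fun x hI hJ => hne (Prod.ext h ?_)
  rw [mem_dyadicI_iff] at hI hJ
  rw [← hI, ← hJ, h]

theorem mem_dyadicI_iff_mem_halves {I : ℤ × ℤ} {x : ℝ} :
    x ∈ dyadicI I ↔ x ∈ dyadicI (leftHalf I) ∨ x ∈ dyadicI (rightHalf I) := by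
  simp only [mem_dyadicI_iff, leftHalf, rightHalf]
  rw [floor_mul_two_zpow_of_le (le_add_of_nonneg_right zero_le_one) x]
  simp only [add_sub_cancel_left, Int.toNat_one, pow_one]
  omega

theorem disjoint_halves (I : ℤ × ℤ) :
    Disjoint (dyadicI (leftHalf I)) (dyadicI (rightHalf I)) :=
  disjoint_dyadicI_of_fst_eq rfl (by simp [leftHalf, rightHalf])

theorem measurableSet_dyadicI (I : ℤ × ℤ) : MeasurableSet (dyadicI I) := measurableSet_Ico

theorem weightedHaar_apply (w : ℝ → ℝ) (I : ℤ × ℤ) (x : ℝ) :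
    weightedHaar w I x =
      (dyadicI (leftHalf I)).indicator (fun _ => 1) x -
        (dyadicI (rightHalf I)).indicator (fun _ => 1) x -
        AIw w I * (dyadicI I).indicator (fun _ => 1) x := by
  have hs : Real.sqrt (len I) ≠ 0 := (Real.sqrt_pos.2 (len_pos I)).ne'
  simp only [weightedHaar, haar]
  field_simp

theorem measurable_weightedHaar (w : ℝ → ℝ) (I : ℤ × ℤ) : Measurable (weightedHaar w I) := by
  simp only [funext (weightedHaar_apply w I)]
  exact ((measurable_const.indicator (measurableSet_dyadicI _)).sub
    (measurable_const.indicator (measurableSet_dyadicI _))).sub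
    ((measurable_const.indicator (measurableSet_dyadicI _)).const_mul _)

theorem weightedHaar_of_notMem {w : ℝ → ℝ} {I : ℤ × ℤ} {x : ℝ} (hx : x ∉ dyadicI I) :
    weightedHaar w I x = 0 := by
  rw [mem_dyadicI_iff_mem_halves, not_or] at hx
  simp [weightedHaar_apply, hx.1, hx.2, mem_dyadicI_iff_mem_halves]

theorem weightedHaar_of_mem_leftHalf {w : ℝ → ℝ} {I : ℤ × ℤ} {x : ℝ}
    (hx : x ∈ dyadicI (leftHalf I)) : weightedHaar w I x = 1 - AIw w I := by
  have hR : x ∉ dyadicI (rightHalf I) := (disjoint_halves I).notMem_of_mem_left hx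
  simp [weightedHaar_apply, hx, hR, mem_dyadicI_iff_mem_halves.2 (Or.inl hx)]

theorem weightedHaar_of_mem_rightHalf {w : ℝ → ℝ} {I : ℤ × ℤ} {x : ℝ}
    (hx : x ∈ dyadicI (rightHalf I)) : weightedHaar w I x = -1 - AIw w I := by
  have hL : x ∉ dyadicI (leftHalf I) := (disjoint_halves I).notMem_of_mem_right hx
  simp [weightedHaar_apply, hx, hL, mem_dyadicI_iff_mem_halves.2 (Or.inr hx)]

theorem exists_weightedHaar_eqOn_dyadicI (w : ℝ → ℝ) {I J : ℤ × ℤ} (hIJ : I.1 < J.1) :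
    ∃ c, ∀ x ∈ dyadicI J, weightedHaar w I x = c := by
  have hJ : (J.2 : ℝ) * 2 ^ (-J.1) ∈ dyadicI J := by
    rw [mem_dyadicI_iff, zpow_neg, inv_mul_cancel_right₀ (zpow_ne_zero _ two_ne_zero),
      Int.floor_intCast]
  refine ⟨weightedHaar w I (J.2 * 2 ^ (-J.1)), fun x hx => ?_⟩
  have hmem (K : ℤ × ℤ) (hK : K.1 ≤ J.1) := mem_dyadicI_iff_of_le hK hx hJ
  simp only [weightedHaar_apply, indicator_const_eq_indicator_const (hmem I hIJ.le),
    indicator_const_eq_indicator_const (hmem (leftHalf I) hIJ),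
    indicator_const_eq_indicator_const (hmem (rightHalf I) hIJ)]

theorem dyadicI_eq_union_halves (I : ℤ × ℤ) :
    dyadicI I = dyadicI (leftHalf I) ∪ dyadicI (rightHalf I) :=
  Set.ext fun _ => mem_dyadicI_iff_mem_halves

theorem setIntegral_dyadicI_eq_len_mul_avg (w : ℝ → ℝ) (I : ℤ × ℤ) :
    ∫ x in dyadicI I, w x = len I * avg w I := by
  rw [avg, mul_inv_cancel_left₀ (len_pos I).ne']

theorem setIntegral_dyadicI_eq_add {w : ℝ → ℝ} (hw : ∀ I, IntegrableOn w (dyadicI I))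
    (I : ℤ × ℤ) :
    ∫ x in dyadicI I, w x =
      (∫ x in dyadicI (leftHalf I), w x) + ∫ x in dyadicI (rightHalf I), w x := by
  rw [dyadicI_eq_union_halves I]
  exact setIntegral_union (disjoint_halves I) (measurableSet_dyadicI _) (hw _) (hw _)

theorem AIw_mul_setIntegral {w : ℝ → ℝ} {I : ℤ × ℤ} (hI : avg w I ≠ 0) :
    AIw w I * ∫ x in dyadicI I, w x =
      (∫ x in dyadicI (leftHalf I), w x) - ∫ x in dyadicI (rightHalf I), w x := by
  simp only [setIntegral_dyadicI_eq_len_mul_avg, AIw, len_leftHalf, len_rightHalf]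
  field_simp

theorem integrable_indicator_dyadicI {w : ℝ → ℝ} (hw : ∀ I, IntegrableOn w (dyadicI I))
    (K : ℤ × ℤ) : Integrable ((dyadicI K).indicator w) :=
  (hw K).integrable_indicator (measurableSet_dyadicI K)

theorem mul_weightedHaar_eq (w : ℝ → ℝ) (I : ℤ × ℤ) (x : ℝ) :
    w x * weightedHaar w I x =
      (dyadicI (leftHalf I)).indicator w x - (dyadicI (rightHalf I)).indicator w x -
        AIw w I * (dyadicI I).indicator w x := by
  classical
  simp only [weightedHaar_apply, Set.indicator_apply]
  split_ifs <;> ring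

theorem integral_mul_weightedHaar {w : ℝ → ℝ} (hw : ∀ I, IntegrableOn w (dyadicI I))
    {I : ℤ × ℤ} (hI : avg w I ≠ 0) : ∫ x, w x * weightedHaar w I x = 0 := by
  have hind := integrable_indicator_dyadicI hw
  have hdiff : Integrable fun x =>
      (dyadicI (leftHalf I)).indicator w x - (dyadicI (rightHalf I)).indicator w x :=
    (hind _).sub (hind _)
  simp only [mul_weightedHaar_eq]
  rw [integral_sub hdiff ((hind _).const_mul _), integral_sub (hind _) (hind _),
    integral_const_mul]
  simp only [integral_indicator (measurableSet_dyadicI _)]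
  rw [AIw_mul_setIntegral hI, sub_self]

theorem mul_weightedHaar_sq_eq (w : ℝ → ℝ) (I : ℤ × ℤ) (x : ℝ) :
    w x * weightedHaar w I x ^ 2 =
      (1 - AIw w I) ^ 2 * (dyadicI (leftHalf I)).indicator w x +
        (-1 - AIw w I) ^ 2 * (dyadicI (rightHalf I)).indicator w x := by
  by_cases hL : x ∈ dyadicI (leftHalf I)
  · have hR : x ∉ dyadicI (rightHalf I) := (disjoint_halves I).notMem_of_mem_left hL
    simp [weightedHaar_of_mem_leftHalf hL, hL, hR, mul_comm]
  by_cases hR : x ∈ dyadicI (rightHalf I)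
  · simp [weightedHaar_of_mem_rightHalf hR, hL, hR, mul_comm]
  · have hI : x ∉ dyadicI I := by simp [mem_dyadicI_iff_mem_halves, hL, hR]
    simp [weightedHaar_of_notMem hI, hL, hR]

theorem integrable_mul_weightedHaar_sq {w : ℝ → ℝ} (hw : ∀ I, IntegrableOn w (dyadicI I))
    (I : ℤ × ℤ) : Integrable fun x => w x * weightedHaar w I x ^ 2 := by
  simp only [mul_weightedHaar_sq_eq]
  exact ((integrable_indicator_dyadicI hw _).const_mul _).add
    ((integrable_indicator_dyadicI hw _).const_mul _)

theorem integral_mul_weightedHaar_sq_le {w : ℝ → ℝ} (hw : ∀ I, IntegrableOn w (dyadicI I))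
    {I : ℤ × ℤ} (hI : 0 < avg w I) :
    ∫ x, w x * weightedHaar w I x ^ 2 ≤ len I * avg w I := by
  have hind := integrable_indicator_dyadicI hw
  simp only [mul_weightedHaar_sq_eq]
  rw [integral_add ((hind _).const_mul _) ((hind _).const_mul _), integral_const_mul,
    integral_const_mul, integral_indicator (measurableSet_dyadicI _),
    integral_indicator (measurableSet_dyadicI _), ← setIntegral_dyadicI_eq_len_mul_avg]
  have hsum := setIntegral_dyadicI_eq_add hw I
  have hdiff := AIw_mul_setIntegral hI.ne'
  have hpos : 0 < ∫ x in dyadicI I, w x := by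
    rw [setIntegral_dyadicI_eq_len_mul_avg]; exact mul_pos (len_pos I) hI
  -- the left side equals `(1 - A²) ∫_I w`
  nlinarith [mul_nonneg (sq_nonneg (AIw w I)) hpos.le]

theorem integral_mul_weightedHaar_mul_weightedHaar {w : ℝ → ℝ}
    (hw : ∀ I, IntegrableOn w (dyadicI I)) (hwavg : ∀ I, avg w I ≠ 0) {I J : ℤ × ℤ}
    (hIJ : I ≠ J) : ∫ x, w x * (weightedHaar w I x * weightedHaar w J x) = 0 := by
  wlog hle : I.1 ≤ J.1 generalizing I J
  · simpa only [mul_comm (weightedHaar w I _)] using this hIJ.symm (le_of_not_ge hle)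
  rcases hle.lt_or_eq with hlt | heq
  · obtain ⟨c, hc⟩ := exists_weightedHaar_eqOn_dyadicI w hlt
    have hfun : (fun x => w x * (weightedHaar w I x * weightedHaar w J x)) =
        fun x => c * (w x * weightedHaar w J x) := funext fun x => by
      by_cases hx : x ∈ dyadicI J
      · rw [hc x hx]; ring
      · simp [weightedHaar_of_notMem hx]
    rw [hfun, integral_const_mul, integral_mul_weightedHaar hw (hwavg J), mul_zero]
  · have hfun : (fun x => w x * (weightedHaar w I x * weightedHaar w J x)) = 0 :=
      funext fun x => by
        by_cases hx : x ∈ dyadicI I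
        · have hJ := (disjoint_dyadicI_of_fst_eq heq hIJ).notMem_of_mem_left hx
          simp [weightedHaar_of_notMem hJ]
        · simp [weightedHaar_of_notMem hx]
    rw [hfun, integral_zero']

theorem aestronglyMeasurable_of_integrableOn_dyadicI {w : ℝ → ℝ}
    (hw : ∀ I, IntegrableOn w (dyadicI I)) : AEStronglyMeasurable w := by
  have hcover : ⋃ k : ℤ, dyadicI (0, k) = univ :=
    eq_univ_of_forall fun x => mem_iUnion.2 ⟨⌊x⌋, mem_dyadicI_iff.2 (by simp)⟩
  rw [← Measure.restrict_univ (μ := volume), ← hcover, aestronglyMeasurable_iUnion_iff]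
  exact fun k => (hw _).aestronglyMeasurable

theorem memLp_sqrt_mul_weightedHaar {w : ℝ → ℝ} (hw₀ : ∀ x, 0 ≤ w x)
    (hw : ∀ I, IntegrableOn w (dyadicI I)) (I : ℤ × ℤ) :
    MemLp (fun x => Real.sqrt (w x) * weightedHaar w I x) 2 := by
  have hmeas : AEStronglyMeasurable fun x => Real.sqrt (w x) * weightedHaar w I x :=
    (Real.continuous_sqrt.comp_aestronglyMeasurable
      (aestronglyMeasurable_of_integrableOn_dyadicI hw)).mul
      (measurable_weightedHaar w I).aestronglyMeasurable
  rw [memLp_two_iff_integrable_sq hmeas]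
  simpa only [mul_pow, Real.sq_sqrt (hw₀ _)] using integrable_mul_weightedHaar_sq hw I

theorem inner_toLp_sqrt_mul_weightedHaar {w : ℝ → ℝ} (hw₀ : ∀ x, 0 ≤ w x)
    (hw : ∀ I, IntegrableOn w (dyadicI I)) (I J : ℤ × ℤ) :
    ⟪(memLp_sqrt_mul_weightedHaar hw₀ hw I).toLp _,
      (memLp_sqrt_mul_weightedHaar hw₀ hw J).toLp _⟫ =
      ∫ x, w x * (weightedHaar w I x * weightedHaar w J x) := by
  rw [MemLp.inner_toLp_eq_integral_mul]
  congr 1 with x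
  rw [mul_mul_mul_comm, Real.mul_self_sqrt (hw₀ x)]

/-- Bessel's inequality for the weighted Haar system: for every `g ∈ L₂`,
`Σ_{I∈D} (1/(|I| m_I w)) ⟨g, w^{1/2} H_I^w⟩² ≤ ‖g‖²_{L₂}`. -/
theorem bessel_weighted_haar
    (w : ℝ → ℝ) (hwpos : ∀ x, 0 < w x)
    (hwint : ∀ I : ℤ × ℤ, IntegrableOn w (dyadicI I) volume)
    (hwavg : ∀ I : ℤ × ℤ, 0 < avg w I)
    (g : ℝ → ℝ) (hg : Measurable g) (hg2 : Integrable (fun x => (g x) ^ 2)) :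
    ∀ S : Finset (ℤ × ℤ),
      ∑ I ∈ S, (len I * avg w I)⁻¹ *
          (∫ x, g x * (Real.sqrt (w x) * weightedHaar w I x)) ^ 2
        ≤ ∫ x, (g x) ^ 2 := by
  intro S
  have hw₀ x : 0 ≤ w x := (hwpos x).le
  set e : ℤ × ℤ → Lp ℝ 2 (volume : Measure ℝ) :=
    fun I => (memLp_sqrt_mul_weightedHaar hw₀ hwint I).toLp _
  have horth : Pairwise fun I J => ⟪e I, e J⟫ = 0 := fun I J hIJ => by
    simp only [e]
    rw [inner_toLp_sqrt_mul_weightedHaar hw₀ hwint]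
    exact integral_mul_weightedHaar_mul_weightedHaar hwint (fun K => (hwavg K).ne') hIJ
  have hnorm I : ‖e I‖ ^ 2 ≤ len I * avg w I := by
    simp only [e]
    rw [← real_inner_self_eq_norm_sq, inner_toLp_sqrt_mul_weightedHaar hw₀ hwint]
    simp only [← sq]
    exact integral_mul_weightedHaar_sq_le hwint (hwavg I)
  have hg' : MemLp g 2 := (memLp_two_iff_integrable_sq hg.aestronglyMeasurable).2 hg2
  have hbessel := sum_inv_mul_inner_sq_le_norm_sq (fun I => mul_pos (len_pos I) (hwavg I))
    horth hnorm (hg'.toLp g) S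
  simpa only [e, MemLp.inner_toLp_eq_integral_mul, MemLp.norm_toLp_sq] using hbessel
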